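/- With f and e as above, the time changes are mutually inverse: for t ∈ (0,T) and z ∈ (0,ζ), one has z = ∫₀^t du/e(u) if and only if t = (1/2)∫₀^z f(y) dy; moreover f(∫₀^t du/e(u)) = 2 e(t) for all t ∈ [0,T]. -/

import Mathlib

/-!
The half-primitive `F z = ½ ∫₀^z f` is continuous and strictly increasing on `[0, ζ]`, with
`F' = f / 2 > 0` inside, so it has a genuine inverse `G : [0, T] → [0, ζ]`. The generalized inverse
in the definition of `e` agrees with `G` on `[0, T)`, hence `e = F' ∘ G` there, and also at `T`,
where both sides vanish since `f ζ = 0`. By the inverse function theorem `G' = 1 / e` on `(0, T)`,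
and a continuous increasing function is the integral of its derivative, so
`∫₀^t du / e(u) = G t` on all of `[0, T]`. Both claims follow.
-/

open intervalIntegral Set Function

section StrictMonoInverse

variable {α β : Type*} {F : α → β} {a b w : α}

theorem StrictMonoOn.csInf_setOf_lt_apply_eq [ConditionallyCompleteLinearOrder α]
    [DenselyOrdered α] [Preorder β] (hF : StrictMonoOn F (Icc a b)) (hw : w ∈ Ico a b) :
    sInf {z | a ≤ z ∧ F w < F z} = w := by
  have hlower : w ∈ lowerBounds {z | a ≤ z ∧ F w < F z} := by
    rintro z ⟨haz, hz⟩
    by_contra! hzw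
    exact (hz.trans (hF ⟨haz, hzw.le.trans hw.2.le⟩ (Ico_subset_Icc_self hw) hzw)).false
  have hsub : Ioc w b ⊆ {z | a ≤ z ∧ F w < F z} := fun z hz =>
    ⟨hw.1.trans hz.1.le, hF (Ico_subset_Icc_self hw) ⟨hw.1.trans hz.1.le, hz.2⟩ hz.1⟩
  refine le_antisymm ?_ (le_csInf ⟨b, hsub ⟨hw.2, le_rfl⟩⟩ hlower)
  calc sInf {z | a ≤ z ∧ F w < F z} ≤ sInf (Ioc w b) :=
        csInf_le_csInf ⟨w, hlower⟩ (nonempty_Ioc.2 hw.2) hsub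
    _ = w := csInf_Ioc hw.2

theorem StrictMonoOn.invFunOn_Icc_eq_iff [LinearOrder α] [Nonempty α] [Preorder β]
    (hF : StrictMonoOn F (Icc a b)) (hsurj : SurjOn F (Icc a b) (Icc (F a) (F b)))
    {s : β} (hs : s ∈ Icc (F a) (F b)) (hw : w ∈ Icc a b) :
    invFunOn F (Icc a b) s = w ↔ s = F w := by
  constructor
  · rintro rfl
    exact (hsurj.rightInvOn_invFunOn hs).symm
  · rintro rfl
    exact hF.injOn.leftInvOn_invFunOn hw

theorem StrictMonoOn.csInf_setOf_lt_eq_invFunOn [ConditionallyCompleteLinearOrder α]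
    [DenselyOrdered α] [Nonempty α] [Preorder β] (hF : StrictMonoOn F (Icc a b))
    (hsurj : SurjOn F (Icc a b) (Icc (F a) (F b))) {s : β} (hs : s ∈ Ico (F a) (F b)) :
    sInf {z | a ≤ z ∧ s < F z} = invFunOn F (Icc a b) s := by
  set w := invFunOn F (Icc a b) s
  have hw : w ∈ Icc a b := hsurj.mapsTo_invFunOn (Ico_subset_Icc_self hs)
  have hFw : F w = s := hsurj.rightInvOn_invFunOn (Ico_subset_Icc_self hs)
  have hwb : w ≠ b := by
    rintro hwb
    rw [hwb] at hFw
    exact hs.2.ne' hFw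
  rw [← hFw]
  exact hF.csInf_setOf_lt_apply_eq ⟨hw.1, hw.2.lt_of_ne hwb⟩

theorem StrictMonoOn.continuousOn_invFunOn_Icc [LinearOrder α] [TopologicalSpace α]
    [OrderTopology α] [Nonempty α] [LinearOrder β] [TopologicalSpace β] [OrderTopology β]
    (hF : StrictMonoOn F (Icc a b)) (hsurj : SurjOn F (Icc a b) (Icc (F a) (F b))) :
    ContinuousOn (invFunOn F (Icc a b)) (Icc (F a) (F b)) := by
  have hmaps := hsurj.mapsTo_invFunOn
  have hinv := hsurj.rightInvOn_invFunOn
  intro s hs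
  refine tendsto_order.2 ⟨fun c hc => ?_, fun c hc => ?_⟩
  · rcases lt_or_ge c a with hca | hac
    · filter_upwards [self_mem_nhdsWithin] with r hr using hca.trans_le (hmaps hr).1
    have hcI : c ∈ Icc a b := ⟨hac, hc.le.trans (hmaps hs).2⟩
    have hFc : F c < s := hinv hs ▸ hF hcI (hmaps hs) hc
    filter_upwards [self_mem_nhdsWithin, mem_nhdsWithin_of_mem_nhds (Ioi_mem_nhds hFc)]
      with r hr hcr
    by_contra! hrc
    have := hF.monotoneOn (hmaps hr) hcI hrc
    rw [hinv hr] at this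
    exact (lt_of_lt_of_le hcr this).false
  · rcases lt_or_ge b c with hbc | hcb
    · filter_upwards [self_mem_nhdsWithin] with r hr using (hmaps hr).2.trans_lt hbc
    have hcI : c ∈ Icc a b := ⟨(hmaps hs).1.trans hc.le, hcb⟩
    have hFc : s < F c := hinv hs ▸ hF (hmaps hs) hcI hc
    filter_upwards [self_mem_nhdsWithin, mem_nhdsWithin_of_mem_nhds (Iio_mem_nhds hFc)]
      with r hr hcr
    by_contra! hrc
    have := hF.monotoneOn hcI (hmaps hr) hrc
    rw [hinv hr] at this
    exact (lt_of_lt_of_le hcr this).false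

end StrictMonoInverse

section RealInverse

variable {F F' : ℝ → ℝ} {a b t : ℝ}

theorem strictMonoOn_Icc_of_hasDerivAt_pos (hc : ContinuousOn F (Icc a b))
    (hderiv : ∀ z ∈ Ioo a b, HasDerivAt F (F' z) z) (hpos : ∀ z ∈ Ioo a b, 0 < F' z) :
    StrictMonoOn F (Icc a b) :=
  strictMonoOn_of_hasDerivWithinAt_pos (convex_Icc a b) hc
    (fun z hz => (hderiv z (by rwa [interior_Icc] at hz)).hasDerivWithinAt)
    (fun z hz => hpos z (by rwa [interior_Icc] at hz))

theorem StrictMonoOn.hasDerivAt_invFunOn_Icc (hF : StrictMonoOn F (Icc a b))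
    (hsurj : SurjOn F (Icc a b) (Icc (F a) (F b))) (ht : t ∈ Ioo (F a) (F b)) {d : ℝ}
    (hderiv : HasDerivAt F d (invFunOn F (Icc a b) t)) (hd : d ≠ 0) :
    HasDerivAt (invFunOn F (Icc a b)) d⁻¹ t := by
  have hcont : ContinuousAt (invFunOn F (Icc a b)) t :=
    (hF.continuousOn_invFunOn_Icc hsurj).continuousAt (Icc_mem_nhds ht.1 ht.2)
  refine hderiv.of_local_left_inverse hcont hd ?_
  filter_upwards [Icc_mem_nhds ht.1 ht.2] with s hs using hsurj.rightInvOn_invFunOn hs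

theorem integral_one_div_eq_invFunOn {e : ℝ → ℝ} (hab : a ≤ b) (hc : ContinuousOn F (Icc a b))
    (hderiv : ∀ z ∈ Ioo a b, HasDerivAt F (F' z) z) (hpos : ∀ z ∈ Ioo a b, 0 < F' z)
    (he : ∀ u ∈ Icc (F a) (F b), e u = F' (invFunOn F (Icc a b) u))
    (ht : t ∈ Icc (F a) (F b)) :
    ∫ u in F a..t, 1 / e u = invFunOn F (Icc a b) t - a := by
  have hF := strictMonoOn_Icc_of_hasDerivAt_pos hc hderiv hpos
  have hsurj := hc.surjOn_Icc (left_mem_Icc.2 hab) (right_mem_Icc.2 hab)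
  set G := invFunOn F (Icc a b)
  have hG_mem : ∀ u ∈ Ioo (F a) (F b), G u ∈ Ioo a b := by
    intro u hu
    have hGu : G u ∈ Icc a b := hsurj.mapsTo_invFunOn (Ioo_subset_Icc_self hu)
    have hFGu : F (G u) = u := hsurj.rightInvOn_invFunOn (Ioo_subset_Icc_self hu)
    refine ⟨hGu.1.lt_of_ne fun h => ?_, hGu.2.lt_of_ne fun h => ?_⟩
    · exact hu.1.ne (h ▸ hFGu)
    · exact hu.2.ne (h ▸ hFGu).symm
  have hGderiv : ∀ u ∈ Ioo (F a) t, HasDerivAt G (F' (G u))⁻¹ u := fun u hu =>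
    have hu' : u ∈ Ioo (F a) (F b) := ⟨hu.1, hu.2.trans_le ht.2⟩
    hF.hasDerivAt_invFunOn_Icc hsurj hu' (hderiv _ (hG_mem u hu')) (hpos _ (hG_mem u hu')).ne'
  have hGcont : ContinuousOn G (Icc (F a) t) :=
    (hF.continuousOn_invFunOn_Icc hsurj).mono (Icc_subset_Icc_right ht.2)
  have hint : IntervalIntegrable (fun u => (F' (G u))⁻¹) MeasureTheory.volume (F a) t :=
    (intervalIntegrable_iff_integrableOn_Ioc_of_le ht.1).2 <|
      integrableOn_deriv_of_nonneg hGcont hGderiv fun u hu =>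
        (inv_pos.2 (hpos _ (hG_mem u ⟨hu.1, hu.2.trans_le ht.2⟩))).le
  have hGa : G (F a) = a := hF.injOn.leftInvOn_invFunOn (left_mem_Icc.2 hab)
  calc ∫ u in F a..t, 1 / e u = ∫ u in F a..t, (F' (G u))⁻¹ := by
        refine integral_congr fun u hu => ?_
        rw [uIcc_of_le ht.1] at hu
        rw [he u (Icc_subset_Icc_right ht.2 hu), one_div]
    _ = G t - a := by rw [integral_eq_sub_of_hasDerivAt_of_le ht.1 hGcont hGderiv hint, hGa]

end RealInverse

section Primitive

variable {f : ℝ → ℝ} {a b z : ℝ}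

theorem continuousOn_primitive_Icc (hab : a ≤ b) (hf : ContinuousOn f (Icc a b)) :
    ContinuousOn (fun z => ∫ y in a..z, f y) (Icc a b) := by
  simpa only [uIcc_of_le hab] using
    continuousOn_primitive_interval' (hf.intervalIntegrable_of_Icc hab) left_mem_uIcc

theorem hasDerivAt_primitive_of_mem_Ioo (hf : ContinuousOn f (Icc a b)) (hz : z ∈ Ioo a b) :
    HasDerivAt (fun z => ∫ y in a..z, f y) (f z) z :=
  integral_hasDerivAt_right
    ((hf.mono (Icc_subset_Icc_right hz.2.le)).intervalIntegrable_of_Icc hz.1.le)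
    ((hf.mono Ioo_subset_Icc_self).stronglyMeasurableAtFilter isOpen_Ioo z hz)
    (hf.continuousAt (Icc_mem_nhds hz.1 hz.2))

end Primitive

theorem spindle_time_change_inverse_general
    (ζ : ℝ) (hζ : 0 < ζ) (f : ℝ → ℝ)
    (hf_cont : ContinuousOn f (Icc 0 ζ))
    (hfζ : f ζ = 0)
    (hf_pos : ∀ z ∈ Ioo 0 ζ, 0 < f z)
    (T : ℝ) (hT : T = (1/2) * ∫ y in (0:ℝ)..ζ, f y)
    (e : ℝ → ℝ)
    (he : ∀ t, e t = if t < T then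
        (1/2) * f (sInf {z : ℝ | 0 ≤ z ∧ t < (1/2) * ∫ y in (0:ℝ)..z, f y})
      else 0) :
    (∀ t ∈ Ioo 0 T, ∀ z ∈ Ioo 0 ζ,
      (z = ∫ u in (0:ℝ)..t, 1 / e u) ↔ (t = (1/2) * ∫ y in (0:ℝ)..z, f y)) ∧
    (∀ t ∈ Icc 0 T, f (∫ u in (0:ℝ)..t, 1 / e u) = 2 * e t) := by
  set F : ℝ → ℝ := fun z => (1/2) * ∫ y in (0:ℝ)..z, f y
  have hFc : ContinuousOn F (Icc 0 ζ) :=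
    continuousOn_const.mul (continuousOn_primitive_Icc hζ.le hf_cont)
  have hFderiv : ∀ z ∈ Ioo 0 ζ, HasDerivAt F ((1/2) * f z) z := fun z hz =>
    (hasDerivAt_primitive_of_mem_Ioo hf_cont hz).const_mul _
  have hFpos : ∀ z ∈ Ioo 0 ζ, 0 < (1/2) * f z := fun z hz => mul_pos one_half_pos (hf_pos z hz)
  have hF := strictMonoOn_Icc_of_hasDerivAt_pos hFc hFderiv hFpos
  have hsurj := hFc.surjOn_Icc (left_mem_Icc.2 hζ.le) (right_mem_Icc.2 hζ.le)
  have hF0 : F 0 = 0 := by simp [F]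
  have hIcc : Icc 0 T = Icc (F 0) (F ζ) := by rw [hF0, hT]
  have he_eq : ∀ t ∈ Icc 0 T, e t = (1/2) * f (invFunOn F (Icc 0 ζ) t) := by
    intro t ht
    rw [he]
    split_ifs with htT
    · rw [hF.csInf_setOf_lt_eq_invFunOn hsurj ⟨(hIcc ▸ ht).1, by rwa [hT] at htT⟩]
    · rw [le_antisymm ht.2 (not_lt.1 htT), hT,
        hF.injOn.leftInvOn_invFunOn (right_mem_Icc.2 hζ.le), hfζ, mul_zero]
  have htime : ∀ t ∈ Icc 0 T, ∫ u in (0:ℝ)..t, 1 / e u = invFunOn F (Icc 0 ζ) t := by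
    intro t ht
    have := integral_one_div_eq_invFunOn hζ.le hFc hFderiv hFpos
      (fun u hu => he_eq u (hIcc ▸ hu)) (hIcc ▸ ht)
    rwa [hF0, sub_zero] at this
  refine ⟨fun t ht z hz => ?_, fun t ht => ?_⟩
  · rw [htime t (Ioo_subset_Icc_self ht), eq_comm]
    exact hF.invFunOn_Icc_eq_iff hsurj (hIcc ▸ Ioo_subset_Icc_self ht) (Ioo_subset_Icc_self hz)
  · rw [htime t ht, he_eq t ht]
    ring

/-- The time changes relating a spindle `f` and its Bessel-type excursion `e` are mutually
inverse: for `t ∈ (0,T)` and `z ∈ (0,ζ)`, `z = ∫₀^t du/e(u)` iff `t = (1/2)∫₀^z f(y)dy`;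
moreover `f(∫₀^t du/e(u)) = 2 e(t)` for all `t ∈ [0,T]`. -/
theorem spindle_time_change_inverse
    (ζ : ℝ) (hζ : 0 < ζ) (f : ℝ → ℝ)
    (hf_cont : ContinuousOn f (Icc 0 ζ))
    (hf0 : f 0 = 0) (hfζ : f ζ = 0)
    (hf_pos : ∀ z ∈ Ioo 0 ζ, 0 < f z)
    (T : ℝ) (hT : T = (1/2) * ∫ y in (0:ℝ)..ζ, f y)
    (e : ℝ → ℝ)
    (he : ∀ t, e t = if t < T then
        (1/2) * f (sInf {z : ℝ | 0 ≤ z ∧ t < (1/2) * ∫ y in (0:ℝ)..z, f y})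
      else 0)
    (hint : ∀ t, 0 ≤ t → t < T → IntervalIntegrable (fun u => 1 / e u) MeasureTheory.volume 0 t) :
    (∀ t ∈ Ioo 0 T, ∀ z ∈ Ioo 0 ζ,
      (z = ∫ u in (0:ℝ)..t, 1 / e u) ↔ (t = (1/2) * ∫ y in (0:ℝ)..z, f y)) ∧
    (∀ t ∈ Icc 0 T, f (∫ u in (0:ℝ)..t, 1 / e u) = 2 * e t) :=
  spindle_time_change_inverse_general ζ hζ f hf_cont hfζ hf_pos T hT e he
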